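/- arXiv:2205.15275 — 2 statements merged into one kernel-verified Lean document; each statement's English description precedes it below -/
import Mathlib

section
/- Let b : int M → ℕ be a function with bounded above support such that for all u ∈ int M, the sum over v ∈ (↑u) ∩ int(↓T(u)) of b(v) is finite (i.e. b is an admissible Betti function). Then the direct sum ⊕_{v ∈ int M} B_v^{b(v)} : M^op → Vect_F is pointwise finite-dimensional, cohomological, sequentially continuous, and has bounded above support (i.e., lies in the category J). -/
open CategoryTheory CategoryTheory.Limits Opposite

noncomputable section

/-- The strip `M ⊂ ℝᵒᵖ × ℝ` between the two lines of slope `-1` given by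
`x + y = a` and `x + y = b`. -/
def Strip (a b : ℝ) : Type := {p : ℝ × ℝ // a ≤ p.1 + p.2 ∧ p.1 + p.2 ≤ b}

namespace Strip

variable {a b : ℝ}

/-- The partial order inherited from `ℝᵒᵖ × ℝ`. -/
instance : PartialOrder (Strip a b) where
  le p q := q.1.1 ≤ p.1.1 ∧ p.1.2 ≤ q.1.2
  le_refl p := ⟨le_rfl, le_rfl⟩
  le_trans p q r h h' := ⟨le_trans h'.1 h.1, le_trans h.2 h'.2⟩
  le_antisymm p q h h' :=
    Subtype.ext (Prod.ext (le_antisymm h'.1 h.1) (le_antisymm h.2 h'.2))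

lemma le_def {p q : Strip a b} : p ≤ q ↔ q.1.1 ≤ p.1.1 ∧ p.1.2 ≤ q.1.2 := Iff.rfl

/-- The glide reflection `T`. -/
def glide (p : Strip a b) : Strip a b :=
  ⟨(a - p.1.2, b - p.1.1), by
    obtain ⟨h1, h2⟩ := p.2; constructor <;> dsimp <;> linarith⟩

/-- The glide reflection `T` as an order isomorphism of `M`. -/
def glideEquiv : Strip a b ≃o Strip a b where
  toFun := glide
  invFun p := ⟨(b - p.1.2, a - p.1.1), by
    obtain ⟨h1, h2⟩ := p.2; constructor <;> dsimp <;> linarith⟩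
  left_inv p := Subtype.ext (by simp [glide])
  right_inv p := Subtype.ext (by simp [glide])
  map_rel_iff' {p q} := by
    show (glide p ≤ glide q) ↔ _
    simp only [le_def, glide]
    constructor <;> rintro ⟨h1, h2⟩ <;> exact ⟨by linarith, by linarith⟩

lemma glideEquiv_coords (p : Strip a b) :
    (glideEquiv p).1 = (a - p.1.2, b - p.1.1) := rfl

lemma glideEquiv_symm_coords (p : Strip a b) :
    (glideEquiv.symm p).1 = (b - p.1.2, a - p.1.1) := rfl

/-- The boundary `∂M = l₀ ∪ l₁`. -/
def OnBoundary (p : Strip a b) : Prop := p.1.1 + p.1.2 = a ∨ p.1.1 + p.1.2 = b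

/-- The interior `int M`. -/
def InInterior (p : Strip a b) : Prop := a < p.1.1 + p.1.2 ∧ p.1.1 + p.1.2 < b

/-- `u` belongs to `(↓v) ∩ int(↑ T⁻¹ v)`, the support of the contravariant block `B_v`;
equivalently, `v ∈ (↑u) ∩ int(↓ T u)`. -/
def BlockCond (v u : Strip a b) : Prop :=
  u ≤ v ∧ u.1.1 < b - v.1.2 ∧ a - v.1.1 < u.1.2

lemma blockCond_convex {v u u' u'' : Strip a b} (h1 : u ≤ u') (h2 : u' ≤ u'')
    (hu : BlockCond v u) (hu'' : BlockCond v u'') : BlockCond v u' :=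
  ⟨le_trans h2 hu''.1, lt_of_le_of_lt h1.1 hu.2.1, lt_of_lt_of_le hu.2.2 h1.2⟩

lemma simpleCond_convex {w u u' u'' : Strip a b} (h1 : u ≤ u') (h2 : u' ≤ u'')
    (hu : u = w) (hu'' : u'' = w) : u' = w :=
  le_antisymm (hu'' ▸ h2) (hu ▸ h1)

variable (a b) in
/-- An axis-aligned rectangle in `M` with corners `u ≤ v ≤ w` and remaining corner on `l₁`. -/
def IsCohomRect (u v w : Strip a b) : Prop :=
  u ≤ v ∧ v ≤ w ∧
    ((v.1.1 = u.1.1 ∧ v.1.2 = w.1.2 ∧ w.1.1 + u.1.2 = b) ∨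
     (v.1.1 = w.1.1 ∧ v.1.2 = u.1.2 ∧ u.1.1 + w.1.2 = b))

lemma IsCohomRect.w_le_glide {u v w : Strip a b} (h : IsCohomRect a b u v w) :
    w ≤ glideEquiv u := by
  obtain ⟨h1, h2, h3⟩ := h
  have hu := u.2; have hv := v.2; have hw := w.2
  obtain ⟨hle1, hle2⟩ := h1; obtain ⟨hle3, hle4⟩ := h2
  rw [le_def]
  rcases h3 with ⟨e1, e2, e3⟩ | ⟨e1, e2, e3⟩ <;>
    exact ⟨by rw [glideEquiv_coords]; dsimp; linarith,
           by rw [glideEquiv_coords]; dsimp; linarith⟩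

lemma IsCohomRect.glideInv_le {u v w : Strip a b} (h : IsCohomRect a b u v w) :
    glideEquiv.symm w ≤ u := by
  have := h.w_le_glide
  have h2 := glideEquiv.symm.monotone this
  simpa using h2

end Strip

section Functors

open Strip

variable (a b : ℝ) (K : Type) [Field K]

attribute [local instance] Classical.propDecidable

/-- auxiliary linear map used for the internal maps of `condFunctor`. -/
def condMap (P : Strip a b → Prop) (u u' : Strip a b) :
    ((PLift (P u') → K) →ₗ[K] (PLift (P u) → K)) where
  toFun f _ := if h' : P u' then f ⟨h'⟩ else 0
  map_add' f g := by funext h; by_cases h' : P u' <;> simp [h']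
  map_smul' c f := by funext h; by_cases h' : P u' <;> simp [h']

@[simp] lemma condMap_apply (P : Strip a b → Prop) (u u' : Strip a b)
    (f : PLift (P u') → K) (h : PLift (P u)) :
    condMap a b K P u u' f h = if h' : P u' then f ⟨h'⟩ else 0 := rfl

/-- A functor `Mᵒᵖ ⥤ Vect_K` supported on the set of points satisfying `P`,
with internal maps the identity wherever possible.  Both the contravariant blocks `B_v`
and the simple functors `S_w` arise this way. -/
def condFunctor (P : Strip a b → Prop)
    (hconv : ∀ ⦃u u' u'' : Strip a b⦄, u ≤ u' → u' ≤ u'' → P u → P u'' → P u') :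
    (Strip a b)ᵒᵖ ⥤ ModuleCat K where
  obj u := ModuleCat.of K (PLift (P u.unop) → K)
  map {x y} f := ModuleCat.ofHom (condMap a b K P y.unop x.unop)
  map_id x := by
    refine ModuleCat.hom_ext (LinearMap.ext fun f => ?_)
    funext h
    show (if h' : P x.unop then f ⟨h'⟩ else 0) = f h
    rw [dif_pos h.down]
  map_comp {x y z} f g := by
    refine ModuleCat.hom_ext (LinearMap.ext fun v => ?_)
    funext h
    show (if h' : P x.unop then v ⟨h'⟩ else 0)
        = condMap a b K P z.unop y.unop (condMap a b K P y.unop x.unop v) h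
    by_cases hx : P x.unop
    · have hy : P y.unop := hconv (leOfHom g.unop) (leOfHom f.unop) h.down hx
      simp [hx, hy]
    · by_cases hy : P y.unop <;> simp [hx, hy]

/-- The contravariant block `B_v`. -/
def Block (v : Strip a b) : (Strip a b)ᵒᵖ ⥤ ModuleCat K :=
  condFunctor a b K (BlockCond v) (fun _ _ _ h1 h2 hu hu'' => blockCond_convex h1 h2 hu hu'')

/-- The simple functor `S_w`. -/
def SimpleF (w : Strip a b) : (Strip a b)ᵒᵖ ⥤ ModuleCat K :=
  condFunctor a b K (fun u => u = w) (fun _ _ _ h1 h2 hu hu'' => simpleCond_convex h1 h2 hu hu'')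

variable {a b K}

/-- The structure map `G(y) → G(x)` of a functor, for `x ≤ y` in `M`. -/
def seqMap (G : (Strip a b)ᵒᵖ ⥤ ModuleCat K) {x y : Strip a b} (h : x ≤ y) :
    G.obj (op y) ⟶ G.obj (op x) :=
  G.map (homOfLE h).op

variable (a b K)

/-- Pointwise finite-dimensionality. -/
def Pfd (G : (Strip a b)ᵒᵖ ⥤ ModuleCat K) : Prop :=
  ∀ u : Strip a b, FiniteDimensional K (G.obj (op u))

/-- Vanishing on the boundary `∂M`. -/
def VanishesOnBoundary (G : (Strip a b)ᵒᵖ ⥤ ModuleCat K) : Prop :=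
  ∀ u : Strip a b, OnBoundary u → ∀ x : G.obj (op u), x = 0

/-- Sequential continuity: for every increasing sequence `u_k` converging to `L`, the
natural map `G L → lim_k G (u k)` is an isomorphism; elementarily, every compatible
family lifts uniquely. -/
def SeqContinuousF (G : (Strip a b)ᵒᵖ ⥤ ModuleCat K) : Prop :=
  ∀ (u : ℕ → Strip a b) (hu : Monotone u) (L : Strip a b) (hle : ∀ k, u k ≤ L),
    Filter.Tendsto (fun k => (u k).1) Filter.atTop (nhds L.1) →
    ∀ x : ∀ k, G.obj (op (u k)),
      (∀ k, seqMap G (hu (Nat.le_succ k)) (x (k + 1)) = x k) →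
      ∃! y : G.obj (op L), ∀ k, seqMap G (hle k) y = x k

/-- Cohomologicality: the long sequences associated to axis-aligned rectangles with one
corner on `l₁` are exact. -/
def Cohomological (G : (Strip a b)ᵒᵖ ⥤ ModuleCat K) : Prop :=
  VanishesOnBoundary a b K G ∧
  ∀ (u v w : Strip a b) (h : IsCohomRect a b u v w) (n : ℤ),
    (Function.Exact
        (seqMap G (((glideEquiv ^ n : Strip a b ≃o Strip a b)).monotone h.w_le_glide))
        (seqMap G (((glideEquiv ^ n : Strip a b ≃o Strip a b)).monotone h.2.1))) ∧
    (Function.Exact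
        (seqMap G (((glideEquiv ^ n : Strip a b ≃o Strip a b)).monotone h.2.1))
        (seqMap G (((glideEquiv ^ n : Strip a b ≃o Strip a b)).monotone h.1))) ∧
    (Function.Exact
        (seqMap G (((glideEquiv ^ n : Strip a b ≃o Strip a b)).monotone h.1))
        (seqMap G (((glideEquiv ^ n : Strip a b ≃o Strip a b)).monotone h.glideInv_le)))

/-- Bounded above support: the support is contained in the downset `{y - x ≤ c}`. -/
def BddAboveSupport (G : (Strip a b)ᵒᵖ ⥤ ModuleCat K) : Prop :=
  ∃ c : ℝ, ∀ u : Strip a b, c < u.1.2 - u.1.1 → ∀ x : G.obj (op u), x = 0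

/-- Membership in the category `𝒥` of pfd, cohomological, sequentially continuous functors
with bounded above support. -/
def MemJ (G : (Strip a b)ᵒᵖ ⥤ ModuleCat K) : Prop :=
  Pfd a b K G ∧ Cohomological a b K G ∧ SeqContinuousF a b K G ∧ BddAboveSupport a b K G

/-- `𝒥`-presentability. -/
def JPresentable (G : (Strip a b)ᵒᵖ ⥤ ModuleCat K) : Prop :=
  ∃ (H P : (Strip a b)ᵒᵖ ⥤ ModuleCat K) (_ : MemJ a b K H) (_ : MemJ a b K P)
    (f : H ⟶ P) (g : P ⟶ G),
      (∀ u : (Strip a b)ᵒᵖ, Function.Exact (f.app u) (g.app u)) ∧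
      (∀ u : (Strip a b)ᵒᵖ, Function.Surjective (g.app u))

/-- The 0-th Betti function `β⁰(G) : int M → ℕ`, `u ↦ dim Nat(G, S_u)`. -/
def beta0 (G : (Strip a b)ᵒᵖ ⥤ ModuleCat K) (v : Strip a b) : ℕ :=
  if InInterior v then Module.finrank K (G ⟶ SimpleF a b K v) else 0

/-- Admissible Betti functions. -/
def AdmissibleBetti (β : Strip a b → ℕ) : Prop :=
  (∀ v, ¬ InInterior v → β v = 0) ∧
  (∃ c : ℝ, ∀ v : Strip a b, c < v.1.2 - v.1.1 → β v = 0) ∧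
  (∀ u : Strip a b, {v : Strip a b | BlockCond v u ∧ β v ≠ 0}.Finite)

/-- Admissible Euler functions. -/
def AdmissibleEuler (μ : Strip a b → ℤ) : Prop :=
  AdmissibleBetti a b (fun v => (μ v).natAbs)

end Functors

section More

open Strip DirectSum

variable (a b : ℝ) (K : Type) [Field K]

attribute [local instance] Classical.propDecidable

lemma condMap_comp (P : Strip a b → Prop)
    (hconv : ∀ ⦃u u' u'' : Strip a b⦄, u ≤ u' → u' ≤ u'' → P u → P u'' → P u')
    {u u' u'' : Strip a b} (h1 : u ≤ u') (h2 : u' ≤ u'') :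
    condMap a b K P u u'' =
      (condMap a b K P u u').comp (condMap a b K P u' u'') := by
  refine LinearMap.ext fun f => funext fun h => ?_
  by_cases hx : P u''
  · have hy : P u' := hconv h1 h2 h.down hx
    simp [hx, hy]
  · by_cases hy : P u' <;> simp [hx, hy]

/-- A direct sum of `condFunctor`s for an indexed family of supports. -/
def condSumFunctor (ι : Type) (P : ι → Strip a b → Prop)
    (hconv : ∀ i, ∀ ⦃u u' u'' : Strip a b⦄, u ≤ u' → u' ≤ u'' → P i u → P i u'' → P i u') :
    (Strip a b)ᵒᵖ ⥤ ModuleCat K where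
  obj u := ModuleCat.of K (⨁ i : ι, (PLift (P i u.unop) → K))
  map {x y} f := ModuleCat.ofHom
    (DFinsupp.mapRange.linearMap (fun i => condMap a b K (P i) y.unop x.unop))
  map_id x := by
    have e : (fun i => condMap a b K (P i) x.unop x.unop)
        = fun i : ι => (LinearMap.id : (PLift (P i x.unop) → K) →ₗ[K] _) := by
      funext i
      refine LinearMap.ext fun f => funext fun h => ?_
      show (if h' : P i x.unop then f ⟨h'⟩ else 0) = f h
      rw [dif_pos h.down]
    change ModuleCat.ofHom
      (DFinsupp.mapRange.linearMap fun i => condMap a b K (P i) x.unop x.unop) = _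
    rw [e, DFinsupp.mapRange.linearMap_id]
    rfl
  map_comp {x y z} f g := by
    have e : (fun i => condMap a b K (P i) z.unop x.unop)
        = fun i => (condMap a b K (P i) z.unop y.unop).comp
            (condMap a b K (P i) y.unop x.unop) := by
      funext i
      exact condMap_comp a b K (P i) (hconv i) (leOfHom g.unop) (leOfHom f.unop)
    change ModuleCat.ofHom
      (DFinsupp.mapRange.linearMap fun i => condMap a b K (P i) z.unop x.unop) = _
    rw [e, DFinsupp.mapRange.linearMap_comp]
    rfl

/-- The direct sum `⊕_{v} B_v^{m v}` of contravariant blocks with multiplicities `m`. -/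
def blockSum (m : Strip a b → ℕ) : (Strip a b)ᵒᵖ ⥤ ModuleCat K :=
  condSumFunctor a b K (Σ v : Strip a b, Fin (m v)) (fun s u => BlockCond s.1 u)
    (fun _ _ _ _ h1 h2 hu hu'' => blockCond_convex h1 h2 hu hu'')

/-- The pointwise direct sum of a sequence of functors. -/
def sumFunctor (Q : ℕ → (Strip a b)ᵒᵖ ⥤ ModuleCat K) :
    (Strip a b)ᵒᵖ ⥤ ModuleCat K where
  obj u := ModuleCat.of K (⨁ n : ℕ, (Q n).obj u)
  map {x y} f := ModuleCat.ofHom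
    (DFinsupp.mapRange.linearMap (fun n => ((Q n).map f).hom))
  map_id x := by
    have e : (fun n => ((Q n).map (𝟙 x)).hom)
        = fun n : ℕ => LinearMap.id := by
      funext n; rw [CategoryTheory.Functor.map_id]; rfl
    change ModuleCat.ofHom (DFinsupp.mapRange.linearMap
      fun n => ((Q n).map (𝟙 x)).hom) = _
    rw [e, DFinsupp.mapRange.linearMap_id]
    rfl
  map_comp {x y z} f g := by
    have e : (fun n => ((Q n).map (f ≫ g)).hom)
        = fun n => (((Q n).map g).hom.comp
            ((Q n).map f).hom) := by
      funext n; rw [CategoryTheory.Functor.map_comp]; rfl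
    change ModuleCat.ofHom (DFinsupp.mapRange.linearMap
      fun n => ((Q n).map (f ≫ g)).hom) = _
    rw [e, DFinsupp.mapRange.linearMap_comp]
    rfl

/-- Precomposition with the glide reflection `T`, as an endofunctor of `Mᵒᵖ`. -/
def Tfun : (Strip a b)ᵒᵖ ⥤ (Strip a b)ᵒᵖ :=
  ((glideEquiv (a := a) (b := b)).monotone.functor).op

/-- A resolution of `G` by functors in `𝒥` (hence a projective resolution in `𝒞`). -/
def IsJResolution (G : (Strip a b)ᵒᵖ ⥤ ModuleCat K)
    (P : ℕ → (Strip a b)ᵒᵖ ⥤ ModuleCat K)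
    (d : ∀ n, P (n + 1) ⟶ P n) (ε : P 0 ⟶ G) : Prop :=
  (∀ n, MemJ a b K (P n)) ∧
  (∀ u, Function.Surjective ((ε.app u))) ∧
  (∀ u, Function.Exact ((d 0).app u) (ε.app u)) ∧
  (∀ n u, Function.Exact ((d (n + 1)).app u) ((d n).app u))

/-- Equivariance of a resolution: `P (n+3) = P n ∘ T` and `d (n+3) = - d n ∘ T`. -/
def IsEquivariantRes (P : ℕ → (Strip a b)ᵒᵖ ⥤ ModuleCat K)
    (d : ∀ n, P (n + 1) ⟶ P n) : Prop :=
  ∃ hEq : ∀ n, P (n + 3) = Tfun a b ⋙ P n,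
    ∀ n, d (n + 3) =
      eqToHom (hEq (n + 1)) ≫ (-(Functor.whiskerLeft (Tfun a b) (d n))) ≫ eqToHom (hEq n).symm

/-- The cochain complex `Nat(P_•, S_v)` obtained by applying `Nat(-, S_v)` to a resolution. -/
def dStar (P : ℕ → (Strip a b)ᵒᵖ ⥤ ModuleCat K) (d : ∀ n, P (n + 1) ⟶ P n)
    (v : Strip a b) (n : ℕ) :
    (P n ⟶ SimpleF a b K v) →ₗ[K] (P (n + 1) ⟶ SimpleF a b K v) :=
  Linear.leftComp K (SimpleF a b K v) (d n)

/-- `dim_K Extⁿ_𝒞(G, S_v)`, computed as the `n`-th cohomology of `Nat(P_•, S_v)` for a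
projective resolution `P_•` of `G` in `𝒞`. -/
def extDim (P : ℕ → (Strip a b)ᵒᵖ ⥤ ModuleCat K) (d : ∀ n, P (n + 1) ⟶ P n)
    (v : Strip a b) : ℕ → ℕ
  | 0 => Module.finrank K (LinearMap.ker (dStar a b K P d v 0))
  | (n + 1) =>
      Module.finrank K
        (↥(LinearMap.ker (dStar a b K P d v (n + 1))) ⧸
          Submodule.comap (LinearMap.ker (dStar a b K P d v (n + 1))).subtype
            (LinearMap.range (dStar a b K P d v n)))

/-- The partial alternating sum `Σ_{n < N} (-1)ⁿ dim Extⁿ(F, S_v)`. -/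
def eulerAt (P : ℕ → (Strip a b)ᵒᵖ ⥤ ModuleCat K) (d : ∀ n, P (n + 1) ⟶ P n)
    (v : Strip a b) (N : ℕ) : ℤ :=
  ∑ n ∈ Finset.range N, (-1 : ℤ) ^ n * (extDim a b K P d v n : ℤ)

/-- Objects of `𝒥`. -/
def JObj : Type 1 := {G : (Strip a b)ᵒᵖ ⥤ ModuleCat.{0} K // MemJ a b K G}

/-- Objects of `pres(𝒥)`. -/
def PresObj : Type 1 := {G : (Strip a b)ᵒᵖ ⥤ ModuleCat.{0} K // JPresentable a b K G}

/-- Relations defining `K₀` of `𝒥`: `[Q] = [P] + [R]` for every (automatically split)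
short exact sequence `0 → P → Q → R → 0` in `𝒥`. -/
def K0JRelations : Set (FreeAbelianGroup (JObj a b K)) :=
  {x | ∃ (P Q R : JObj a b K) (κ : P.1 ⟶ Q.1) (ρ : Q.1 ⟶ R.1),
    (∀ u, Function.Injective (κ.app u)) ∧ (∀ u, Function.Surjective (ρ.app u)) ∧
    (∀ u, Function.Exact (κ.app u) (ρ.app u)) ∧
    x = FreeAbelianGroup.of Q - FreeAbelianGroup.of P - FreeAbelianGroup.of R}

/-- The Grothendieck group `K₀(𝒥)`. -/
def K0J : Type 1 :=
  FreeAbelianGroup (JObj a b K) ⧸ AddSubgroup.closure (K0JRelations a b K)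

instance : AddCommGroup (K0J a b K) := by unfold K0J; infer_instance

/-- The class `[G] ∈ K₀(𝒥)`. -/
def K0Jmk (G : JObj a b K) : K0J a b K :=
  QuotientAddGroup.mk (FreeAbelianGroup.of G)

/-- Relations defining `K₀` of `pres(𝒥)`: `[Q] = [P] + [R]` for every short exact
sequence `0 → P → Q → R → 0` of `𝒥`-presentable functors. -/
def K0PresRelations : Set (FreeAbelianGroup (PresObj a b K)) :=
  {x | ∃ (P Q R : PresObj a b K) (κ : P.1 ⟶ Q.1) (ρ : Q.1 ⟶ R.1),
    (∀ u, Function.Injective (κ.app u)) ∧ (∀ u, Function.Surjective (ρ.app u)) ∧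
    (∀ u, Function.Exact (κ.app u) (ρ.app u)) ∧
    x = FreeAbelianGroup.of Q - FreeAbelianGroup.of P - FreeAbelianGroup.of R}

/-- The Grothendieck group `K₀(pres 𝒥)`. -/
def K0Pres : Type 1 :=
  FreeAbelianGroup (PresObj a b K) ⧸ AddSubgroup.closure (K0PresRelations a b K)

instance : AddCommGroup (K0Pres a b K) := by unfold K0Pres; infer_instance

/-- The class `[G] ∈ K₀(pres 𝒥)`. -/
def K0PresMk (G : PresObj a b K) : K0Pres a b K :=
  QuotientAddGroup.mk (FreeAbelianGroup.of G)

/-- The abelian group `G(𝔹)` of admissible Euler functions. -/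
def eulerGroup : AddSubgroup (Strip a b → ℤ) where
  carrier := {μ | AdmissibleEuler a b μ}
  zero_mem' := by
    refine ⟨fun v _ => rfl, ⟨0, fun v _ => rfl⟩, fun u => ?_⟩
    convert Set.finite_empty
    ext v; simp
  add_mem' := by
    rintro μ ν ⟨h1, ⟨c1, h2⟩, h3⟩ ⟨h1', ⟨c2, h2'⟩, h3'⟩
    refine ⟨fun v hv => ?_, ⟨max c1 c2, fun v hv => ?_⟩, fun u => ?_⟩
    · simp only [Pi.add_apply]
      rw [show μ v = 0 by simpa using h1 v hv, show ν v = 0 by simpa using h1' v hv]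
      rfl
    · simp only [Pi.add_apply]
      rw [show μ v = 0 by simpa using h2 v (lt_of_le_of_lt (le_max_left _ _) hv),
        show ν v = 0 by simpa using h2' v (lt_of_le_of_lt (le_max_right _ _) hv)]
      rfl
    · refine Set.Finite.subset ((h3 u).union (h3' u)) ?_
      rintro v ⟨hb, hne⟩
      by_cases hμ : μ v = 0
      · exact Or.inr ⟨hb, by simp only [Pi.add_apply, hμ, zero_add] at hne; simpa using hne⟩
      · exact Or.inl ⟨hb, by simpa using hμ⟩
  neg_mem' := by
    rintro μ ⟨h1, h2, h3⟩
    refine ⟨fun v hv => ?_, ?_, fun u => ?_⟩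
    · simp only [Pi.neg_apply, Int.natAbs_neg]; exact h1 v hv
    · obtain ⟨c, hc⟩ := h2
      exact ⟨c, fun v hv => by simp only [Pi.neg_apply, Int.natAbs_neg]; exact hc v hv⟩
    · refine Set.Finite.subset (h3 u) ?_
      rintro v ⟨hb, hne⟩
      exact ⟨hb, by simpa [Int.natAbs_neg] using hne⟩

/-- Subfunctors of a functor `G : Mᵒᵖ ⥤ Vect_K`. -/
def Subfunctor (G : (Strip a b)ᵒᵖ ⥤ ModuleCat K) : Type :=
  {S : ∀ u : Strip a b, Submodule K (G.obj (op u)) //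
    ∀ (u u' : Strip a b) (h : u' ≤ u), Submodule.map (seqMap G h).hom (S u) ≤ S u'}

end More

end

/-!
Every summand `B_v` of `blockSum` is one copy of `K` on a convex region, and the structure maps
of the direct sum act summandwise, so the properties can be checked one block at a time.
Exactness: a cohomological rectangle and its `T`-translates meet the support of a block in
exactly the patterns for which each three-term piece `K → K → 0`, `0 → K → K` is exact.
Continuity: along `u_k ↑ L` the support of `B_v` contains a tail of `u_k` iff it contains `L`
(the support is closed in the two non-strict inequalities and the strict ones are inherited from
`u_k ≤ L`), so compatible families are eventually constant and lift uniquely. Admissibility of `m`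
leaves only finitely many nonzero summands at each point, which gives pointwise finite
dimensionality and lets the summandwise lifts assemble into an element of the direct sum.
-/

open Filter Topology

lemma subsingleton_plift_fun {p : Prop} {β : Type*} (hp : ¬ p) : Subsingleton (PLift p → β) :=
  have : IsEmpty (PLift p) := ⟨fun h => hp h.down⟩
  inferInstance

namespace DFinsupp

variable {ι R : Type*} [Ring R] {A B C : ι → Type*}
  [∀ i, AddCommGroup (A i)] [∀ i, Module R (A i)]
  [∀ i, AddCommGroup (B i)] [∀ i, Module R (B i)]
  [∀ i, AddCommGroup (C i)] [∀ i, Module R (C i)]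

theorem exact_mapRange_linearMap {f : ∀ i, A i →ₗ[R] B i} {g : ∀ i, B i →ₗ[R] C i}
    (h : ∀ i, Function.Exact (f i) (g i)) :
    Function.Exact (mapRange.linearMap f) (mapRange.linearMap g) := by
  rw [LinearMap.exact_iff, ker_mapRangeLinearMap, range_mapRangeLinearMap]
  simp only [fun i => LinearMap.exact_iff.mp (h i)]

theorem finite_of_subsingleton_of_notMem [IsNoetherianRing R] [∀ i, Module.Finite R (A i)]
    {S : Set ι} (hS : S.Finite) (h : ∀ i ∉ S, Subsingleton (A i)) :
    Module.Finite R (Π₀ i, A i) := by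
  have : Finite S := hS
  refine Module.Finite.of_injective (LinearMap.pi fun i : S => lapply (M := A) (R := R) i.1) ?_
  intro x y hxy
  ext i
  by_cases hi : i ∈ S
  · exact congrFun hxy ⟨i, hi⟩
  · exact (h i hi).elim _ _

theorem existsUnique_mapRange_linearMap_eq {κ : Type*} {N : κ → ι → Type*}
    [∀ k i, AddCommGroup (N k i)] [∀ k i, Module R (N k i)] (f : ∀ k i, A i →ₗ[R] N k i)
    (x : ∀ k, Π₀ i, N k i) {S : Set ι} (hS : S.Finite) (h : ∀ i ∉ S, Subsingleton (A i))
    (hx : ∀ i, ∃! y : A i, ∀ k, f k i y = x k i) :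
    ∃! y : Π₀ i, A i, ∀ k, mapRange.linearMap (f k) y = x k := by
  classical
  choose y hy huniq using hx
  have hmk : ∀ i, mk hS.toFinset (fun i => y i) i = y i := by
    intro i
    by_cases hi : i ∈ S
    · exact mk_of_mem (hS.mem_toFinset.mpr hi)
    · exact (h i hi).elim _ _
  refine ⟨mk hS.toFinset fun i => y i, fun k => ext fun i => ?_, fun y' hy' => ext fun i => ?_⟩
  · simp only [mapRange.linearMap_apply, mapRange_apply, hmk, hy]
  · rw [hmk]
    exact huniq i _ fun k => by simpa using congr($(hy' k) i)

end DFinsupp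

namespace Strip

variable {a b : ℝ}

lemma blockCond_iff {v u : Strip a b} :
    BlockCond v u ↔ v.1.1 ≤ u.1.1 ∧ u.1.2 ≤ v.1.2 ∧ u.1.1 < b - v.1.2 ∧ a - v.1.1 < u.1.2 :=
  and_assoc

lemma blockCond_glide_glide_iff {v u : Strip a b} :
    BlockCond (glideEquiv v) (glideEquiv u) ↔ BlockCond v u := by
  simp only [blockCond_iff, glideEquiv_coords]
  constructor <;> rintro ⟨h1, h2, h3, h4⟩ <;> refine ⟨?_, ?_, ?_, ?_⟩ <;> linarith

lemma blockCond_zpow_zpow_iff (n : ℤ) {v u : Strip a b} :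
    BlockCond ((glideEquiv ^ n : Strip a b ≃o Strip a b) v) ((glideEquiv ^ n) u) ↔
      BlockCond v u := by
  induction n using Int.induction_on generalizing v u with
  | zero => rfl
  | succ n ih =>
    rw [zpow_add_one, RelIso.mul_apply, RelIso.mul_apply, ih, blockCond_glide_glide_iff]
  | pred n ih =>
    rw [sub_eq_add_neg, zpow_add, zpow_neg_one, RelIso.mul_apply, RelIso.mul_apply, ih,
      ← blockCond_glide_glide_iff, RelIso.apply_inv_self, RelIso.apply_inv_self]

lemma blockCond_zpow_apply_iff (n : ℤ) {v u : Strip a b} :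
    BlockCond v ((glideEquiv ^ n : Strip a b ≃o Strip a b) u) ↔
      BlockCond ((glideEquiv ^ n)⁻¹ v) u := by
  rw [← blockCond_zpow_zpow_iff n (v := (glideEquiv ^ n)⁻¹ v), RelIso.apply_inv_self]

lemma BlockCond.not_onBoundary {v u : Strip a b} (h : BlockCond v u) : ¬ OnBoundary u := by
  obtain ⟨h1, h2, h3, h4⟩ := blockCond_iff.mp h
  rintro (hu | hu) <;> linarith

lemma BlockCond.sub_le {v u : Strip a b} (h : BlockCond v u) :
    u.1.2 - u.1.1 ≤ v.1.2 - v.1.1 := by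
  obtain ⟨h1, h2, -⟩ := blockCond_iff.mp h
  linarith

lemma eventually_blockCond_iff {v L : Strip a b} {u : ℕ → Strip a b} (hle : ∀ k, u k ≤ L)
    (htend : Tendsto (fun k => (u k).1) atTop (𝓝 L.1)) :
    (∀ᶠ k in atTop, BlockCond v (u k)) ↔ BlockCond v L := by
  have h1 : Tendsto (fun k => (u k).1.1) atTop (𝓝 L.1.1) := (continuous_fst.tendsto _).comp htend
  have h2 : Tendsto (fun k => (u k).1.2) atTop (𝓝 L.1.2) := (continuous_snd.tendsto _).comp htend
  constructor
  · intro hev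
    obtain ⟨k, hk⟩ := hev.exists
    obtain ⟨-, -, hk3, hk4⟩ := blockCond_iff.mp hk
    refine blockCond_iff.mpr ⟨ge_of_tendsto h1 ?_, le_of_tendsto h2 ?_,
      (hle k).1.trans_lt hk3, hk4.trans_le (hle k).2⟩ <;>
      filter_upwards [hev] with j hj
    exacts [(blockCond_iff.mp hj).1, (blockCond_iff.mp hj).2.1]
  · intro hL
    obtain ⟨hL1, hL2, hL3, hL4⟩ := blockCond_iff.mp hL
    filter_upwards [h1.eventually_lt_const hL3, h2.eventually_const_lt hL4] with k hk3 hk4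
    exact blockCond_iff.mpr ⟨hL1.trans (hle k).1, (hle k).2.trans hL2, hk3, hk4⟩

lemma IsCohomRect.blockCond_pattern {u v w : Strip a b} (h : IsCohomRect a b u v w)
    (s : Strip a b) :
    (BlockCond s w → (BlockCond s v ↔ ¬ BlockCond s (glideEquiv u))) ∧
    (BlockCond s v → (BlockCond s u ↔ ¬ BlockCond s w)) ∧
    (BlockCond s u → (BlockCond s (glideEquiv.symm w) ↔ ¬ BlockCond s v)) := by
  obtain ⟨⟨huv1, huv2⟩, ⟨hvw1, hvw2⟩, hcase⟩ := h
  obtain ⟨hu1, hu2⟩ := u.2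
  obtain ⟨hv1, hv2⟩ := v.2
  obtain ⟨hw1, hw2⟩ := w.2
  simp only [blockCond_iff, glideEquiv_coords, glideEquiv_symm_coords]
  grind

end Strip

section CondFunctor

variable {a b : ℝ} {K : Type} [Field K]

lemma condMap_self {P : Strip a b → Prop} {u : Strip a b} (f : PLift (P u) → K) :
    condMap a b K P u u f = f :=
  funext fun h => by rw [condMap_apply, dif_pos h.down]

lemma condMap_exact {P : Strip a b → Prop} {x y z : Strip a b}
    (hpat : P y → (P x ↔ ¬ P z)) :
    Function.Exact (condMap a b K P y z) (condMap a b K P x y) := by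
  intro c
  by_cases hy : P y
  swap
  · have := subsingleton_plift_fun (β := K) hy
    obtain rfl : c = 0 := Subsingleton.elim _ _
    exact iff_of_true (map_zero _) ⟨0, map_zero _⟩
  by_cases hx : P x
  · have hz := (hpat hy).mp hx
    have hzero : ∀ f, condMap a b K P y z f = 0 := fun f => funext fun _ => by simp [hz]
    simp only [Set.mem_range, hzero, exists_const]
    constructor
    · intro h
      have hc : ∀ h' : P y, c ⟨h'⟩ = 0 := by simpa [hx] using congrFun h ⟨hx⟩
      exact funext fun h' => (hc h'.down).symm
    · rintro rfl
      exact map_zero _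
  · have hz : P z := not_not.mp (mt (hpat hy).mpr hx)
    have := subsingleton_plift_fun (β := K) hx
    exact iff_of_true (Subsingleton.elim _ _) ⟨fun _ => c ⟨hy⟩, funext fun h => by simp [hz]⟩

lemma condMap_existsUnique_lift {P : Strip a b → Prop}
    (hconv : ∀ ⦃u u' u'' : Strip a b⦄, u ≤ u' → u' ≤ u'' → P u → P u'' → P u')
    {u : ℕ → Strip a b} (hu : Monotone u) {L : Strip a b}
    (hP : (∀ᶠ k in atTop, P (u k)) ↔ P L) (x : ∀ k, PLift (P (u k)) → K)
    (hx : ∀ k, condMap a b K P (u k) (u (k + 1)) (x (k + 1)) = x k) :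
    ∃! y : PLift (P L) → K, ∀ k, condMap a b K P (u k) L y = x k := by
  have hcompat : ∀ k j, k ≤ j → condMap a b K P (u k) (u j) (x j) = x k := by
    intro k j hkj
    induction j, hkj using Nat.le_induction with
    | base => exact condMap_self _
    | succ j hkj ih =>
      rw [condMap_comp a b K P hconv (hu hkj) (hu j.le_succ), LinearMap.comp_apply, hx j, ih]
  by_cases hL : P L
  · obtain ⟨N, hN⟩ := eventually_atTop.mp (hP.mpr hL)
    have hconst : ∀ k (h : P (u k)), x k ⟨h⟩ = x N ⟨hN N le_rfl⟩ := by
      intro k h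
      have hj := hN (max k N) (le_max_right k N)
      have key : ∀ i ≤ max k N, ∀ hi : P (u i), x i ⟨hi⟩ = x (max k N) ⟨hj⟩ := fun i hi _ => by
        rw [← hcompat i _ hi, condMap_apply, dif_pos hj]
      rw [key k (le_max_left k N), key N (le_max_right k N)]
    refine ⟨fun _ => x N ⟨hN N le_rfl⟩, fun k => funext fun h => ?_, fun y hy => funext fun h => ?_⟩
    · rw [condMap_apply, dif_pos hL, hconst k h.down]
    · have := congrFun (hy N) ⟨hN N le_rfl⟩
      rw [condMap_apply, dif_pos hL] at this
      exact this
  · have := subsingleton_plift_fun (β := K) hL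
    refine ⟨0, fun k => funext fun h => ?_, fun y _ => Subsingleton.elim _ _⟩
    obtain ⟨j, hkj, hj⟩ := frequently_atTop.mp (not_eventually.mp (mt hP.mp hL)) k
    rw [map_zero, ← hcompat k j hkj, condMap_apply, dif_neg hj, Pi.zero_apply]

end CondFunctor

section CondSum

variable {a b : ℝ} {K : Type} [Field K] {ι : Type} {P : ι → Strip a b → Prop}
  {hconv : ∀ i, ∀ ⦃u u' u'' : Strip a b⦄, u ≤ u' → u' ≤ u'' → P i u → P i u'' → P i u'}

lemma condSumFunctor_obj_eq_zero {u : Strip a b} (hu : ∀ i, ¬ P i u)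
    (x : (condSumFunctor a b K ι P hconv).obj (op u)) : x = 0 :=
  DFinsupp.ext fun i => (subsingleton_plift_fun (hu i)).elim _ _

lemma condSumFunctor_pfd (hfin : ∀ u, {i | P i u}.Finite) :
    Pfd a b K (condSumFunctor a b K ι P hconv) :=
  fun u => DFinsupp.finite_of_subsingleton_of_notMem (hfin u) fun _ hi => subsingleton_plift_fun hi

lemma condSumFunctor_exact {x y z : Strip a b} (hxy : x ≤ y) (hyz : y ≤ z)
    (hpat : ∀ i, P i y → (P i x ↔ ¬ P i z)) :
    Function.Exact (seqMap (condSumFunctor a b K ι P hconv) hyz)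
      (seqMap (condSumFunctor a b K ι P hconv) hxy) :=
  DFinsupp.exact_mapRange_linearMap fun i => condMap_exact (hpat i)

lemma condSumFunctor_seqContinuous (hfin : ∀ u, {i | P i u}.Finite)
    (hlim : ∀ i (u : ℕ → Strip a b) (L : Strip a b), (∀ k, u k ≤ L) →
      Tendsto (fun k => (u k).1) atTop (𝓝 L.1) → ((∀ᶠ k in atTop, P i (u k)) ↔ P i L)) :
    SeqContinuousF a b K (condSumFunctor a b K ι P hconv) := by
  intro u hu L hle htend x hx
  let x' : ∀ k, Π₀ i, PLift (P i (u k)) → K := x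
  have hx' : ∀ k i, condMap a b K (P i) (u k) (u (k + 1)) (x' (k + 1) i) = x' k i :=
    fun k i => DFunLike.congr_fun (f := (_ : Π₀ i, PLift (P i (u k)) → K)) (hx k) i
  exact DFinsupp.existsUnique_mapRange_linearMap_eq (fun k i => condMap a b K (P i) (u k) L) x'
    (hfin L) (fun _ hi => subsingleton_plift_fun hi) fun i =>
      condMap_existsUnique_lift (hconv i) hu (hlim i u L hle htend) (fun k => x' k i) (hx' · i)

end CondSum

section BlockSum

open Strip

variable {a b : ℝ} {K : Type} [Field K] {m : Strip a b → ℕ}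

lemma finite_setOf_blockCond_fst {u : Strip a b} (hm : {v | BlockCond v u ∧ m v ≠ 0}.Finite) :
    {s : Σ v, Fin (m v) | BlockCond s.1 u}.Finite := by
  refine (hm.preimage' fun v _ => ?_).subset fun s hs => ⟨hs, s.2.pos.ne'⟩
  refine (Set.finite_range (Sigma.mk v)).subset ?_
  rintro ⟨w, i⟩ rfl
  exact ⟨i, rfl⟩

lemma blockSum_cohomological : Cohomological a b K (blockSum a b K m) := by
  refine ⟨fun u hu => condSumFunctor_obj_eq_zero fun s hs => hs.not_onBoundary hu,
    fun u v w h n => ?_⟩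
  refine ⟨condSumFunctor_exact _ _ fun s => ?_, condSumFunctor_exact _ _ fun s => ?_,
    condSumFunctor_exact _ _ fun s => ?_⟩ <;>
  simp only [blockCond_zpow_apply_iff]
  exacts [(h.blockCond_pattern _).1, (h.blockCond_pattern _).2.1, (h.blockCond_pattern _).2.2]

lemma blockSum_bddAboveSupport (hm : ∃ c : ℝ, ∀ v : Strip a b, c < v.1.2 - v.1.1 → m v = 0) :
    BddAboveSupport a b K (blockSum a b K m) := by
  obtain ⟨c, hc⟩ := hm
  exact ⟨c, fun u hu => condSumFunctor_obj_eq_zero fun s hs =>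
    s.2.pos.ne' (hc s.1 (hu.trans_le hs.sub_le))⟩

end BlockSum

/-- for an admissible Betti function `m`, the direct sum
`⊕_{v} B_v^{m v}` is pfd, cohomological, sequentially continuous and has bounded above
support, i.e. it lies in `𝒥`. -/
theorem blockSum_memJ (a b : ℝ) (K : Type) [Field K]
    (m : Strip a b → ℕ) (hm : AdmissibleBetti a b m) :
    MemJ a b K (blockSum a b K m) := by
  obtain ⟨-, hbdd, hfin⟩ := hm
  have hfin' := fun u => finite_setOf_blockCond_fst (hfin u)
  exact ⟨condSumFunctor_pfd hfin', blockSum_cohomological,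
    condSumFunctor_seqContinuous hfin' fun _ _ _ => Strip.eventually_blockCond_iff,
    blockSum_bddAboveSupport hbdd⟩
end

section
/- Let F be a J-presentable functor admitting an equivariant projective resolution (P_•, δ_•), i.e. P_{n+3} = P_n ∘ T and δ_{n+3} = −δ_n ∘ T for all n ≥ 0. Then β^{n+3}(F) = β^n(F) ∘ T for all n ≥ 1, and consequently for every u ∈ int M, β^n(F)(u) = 0 for all but finitely many n, so the Euler function χ(F)(u) = Σ_{n≥0} (−1)^n dim Ext^n_C(F, S_u) is well-defined. -/
open CategoryTheory CategoryTheory.Limits Opposite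

noncomputable section

section Functors

open Strip

variable (a b : ℝ) (K : Type) [Field K]

attribute [local instance] Classical.propDecidable

variable {a b K}

variable (a b K)

end Functors

section More

open Strip DirectSum

variable (a b : ℝ) (K : Type) [Field K]

attribute [local instance] Classical.propDecidable

end More

end

/-!
Precomposition with `T` identifies `Nat(P n, S_{T v})` with `Nat(P (n + 3), S_v)`, because
`S_{T v} ∘ T = S_v`. Under these identifications the differentials of the cochain complexes
`Nat(P •, S_{T v})` and `Nat(P •, S_v)` agree up to sign, so `β^{n+3}(v) = β^n(T v)` wherever
both sides are cohomology of a three-term piece, i.e. for `n ≥ 1`. Iterating,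
`β^{r+3k}(v) = β^r(T^k v)` for `r = 1, 2, 3`, and `T^k` raises `y - x` by `k (b - a)`; once
`T^k v` lies outside the bounded-above supports of `P 1, P 2, P 3`, these Betti numbers vanish.
-/

section Cohomology

variable {R A B C A' B' C' : Type*} [Ring R]
  [AddCommGroup A] [Module R A] [AddCommGroup B] [Module R B] [AddCommGroup C] [Module R C]
  [AddCommGroup A'] [Module R A'] [AddCommGroup B'] [Module R B'] [AddCommGroup C'] [Module R C']

theorem Submodule.finrank_quotient_comap_subtype_map_equiv (e : B ≃ₗ[R] B')
    (p q : Submodule R B) :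
    Module.finrank R (p ⧸ q.comap p.subtype) =
      Module.finrank R (p.map (e : B →ₗ[R] B') ⧸
        (q.map (e : B →ₗ[R] B')).comap (p.map (e : B →ₗ[R] B')).subtype) := by
  refine LinearEquiv.finrank_eq (Submodule.Quotient.equiv _ _ (e.submoduleMap p) ?_)
  ext y
  simp [Submodule.map_equiv_eq_comap_symm]

namespace LinearMap

theorem ker_eq_map_ker_of_comp_eq_neg {g : B →ₗ[R] C} {g' : B' →ₗ[R] C'} {e₂ : B ≃ₗ[R] B'}
    {e₃ : C ≃ₗ[R] C'} (hg : g' ∘ₗ e₂ = -(e₃ ∘ₗ g)) :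
    ker g' = (ker g).map (e₂ : B →ₗ[R] B') := by
  have hker : ker g = (ker g').comap (e₂ : B →ₗ[R] B') := by
    rw [← ker_comp, hg, ker_neg, LinearEquiv.ker_comp]
  rw [hker, Submodule.map_comap_eq_of_surjective e₂.surjective]

theorem range_eq_map_range_of_comp_eq_neg {f : A →ₗ[R] B} {f' : A' →ₗ[R] B'}
    {e₁ : A ≃ₗ[R] A'} {e₂ : B ≃ₗ[R] B'} (hf : f' ∘ₗ e₁ = -(e₂ ∘ₗ f)) :
    range f' = (range f).map (e₂ : B →ₗ[R] B') := by
  rw [← LinearEquiv.range_comp e₁ f', hf, range_neg, range_comp]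

theorem finrank_cohomology_eq_of_comp_eq_neg {f : A →ₗ[R] B} {g : B →ₗ[R] C}
    {f' : A' →ₗ[R] B'} {g' : B' →ₗ[R] C'} (e₁ : A ≃ₗ[R] A') (e₂ : B ≃ₗ[R] B') (e₃ : C ≃ₗ[R] C')
    (hf : f' ∘ₗ e₁ = -(e₂ ∘ₗ f)) (hg : g' ∘ₗ e₂ = -(e₃ ∘ₗ g)) :
    Module.finrank R (ker g' ⧸ (range f').comap (ker g').subtype) =
      Module.finrank R (ker g ⧸ (range f).comap (ker g).subtype) := by
  rw [ker_eq_map_ker_of_comp_eq_neg hg, range_eq_map_range_of_comp_eq_neg hf]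
  exact (Submodule.finrank_quotient_comap_subtype_map_equiv e₂ _ _).symm

end LinearMap

end Cohomology

namespace CategoryTheory

variable (R : Type*) [Semiring R]

instance Functor.whiskeringLeft_obj_linear {C D E : Type*} [Category* C] [Category* D]
    [Category* E] [Preadditive E] [CategoryTheory.Linear R E] (F : C ⥤ D) :
    ((Functor.whiskeringLeft C D E).obj F).Linear R where
  map_smul _ _ := by ext; simp

noncomputable def Functor.mapLinearEquiv {C D : Type*} [Category* C] [Category* D]
    [Preadditive C] [Preadditive D] [CategoryTheory.Linear R C] [CategoryTheory.Linear R D]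
    (F : C ⥤ D) [F.Additive] [F.Linear R] [F.Full] [F.Faithful] (X Y : C) :
    (X ⟶ Y) ≃ₗ[R] (F.obj X ⟶ F.obj Y) :=
  LinearEquiv.ofBijective (F.mapLinearMap R) ⟨F.map_injective, F.map_surjective⟩

end CategoryTheory

open Strip

variable {a b : ℝ} {K : Type} [Field K]

theorem Strip.glideEquiv_sub (p : Strip a b) :
    (glideEquiv p).1.2 - (glideEquiv p).1.1 = p.1.2 - p.1.1 + (b - a) := by
  rw [glideEquiv_coords]; ring

theorem Strip.iterate_glideEquiv_sub (k : ℕ) (p : Strip a b) :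
    ((⇑glideEquiv)^[k] p).1.2 - ((⇑glideEquiv)^[k] p).1.1 = p.1.2 - p.1.1 + k * (b - a) := by
  induction k with
  | zero => simp
  | succ k ih => rw [Function.iterate_succ_apply', glideEquiv_sub, ih]; push_cast; ring

theorem Strip.exists_forall_lt_iterate_glideEquiv_sub (hab : a < b) (p : Strip a b) (c : ℝ) :
    ∃ k₀ : ℕ, ∀ k, k₀ ≤ k → c < ((⇑glideEquiv)^[k] p).1.2 - ((⇑glideEquiv)^[k] p).1.1 := by
  obtain ⟨k₀, hk₀⟩ := exists_nat_gt ((c - (p.1.2 - p.1.1)) / (b - a))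
  refine ⟨k₀, fun k hk => ?_⟩
  have hk' : (c - (p.1.2 - p.1.1)) / (b - a) < k := hk₀.trans_le (by exact_mod_cast hk)
  rw [div_lt_iff₀ (sub_pos.2 hab)] at hk'
  rw [iterate_glideEquiv_sub]
  linarith

instance : (Tfun a b).IsEquivalence := glideEquiv.equivalence.op.isEquivalence_functor

theorem condFunctor_congr {P Q : Strip a b → Prop} (h : P = Q)
    (hP : ∀ ⦃u u' u'' : Strip a b⦄, u ≤ u' → u' ≤ u'' → P u → P u'' → P u')
    (hQ : ∀ ⦃u u' u'' : Strip a b⦄, u ≤ u' → u' ≤ u'' → Q u → Q u'' → Q u') :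
    condFunctor a b K P hP = condFunctor a b K Q hQ := by
  subst h; rfl

theorem tfun_comp_simpleF_glideEquiv (v : Strip a b) :
    Tfun a b ⋙ SimpleF a b K (glideEquiv v) = SimpleF a b K v :=
  condFunctor_congr (funext fun _ => propext glideEquiv.injective.eq_iff)
    (fun _ _ _ h₁ h₂ => simpleCond_convex (glideEquiv.monotone h₁) (glideEquiv.monotone h₂)) _

noncomputable def homSimpleFGlideEquiv {G G' : (Strip a b)ᵒᵖ ⥤ ModuleCat K}
    (h : G' = Tfun a b ⋙ G) (v : Strip a b) :
    (G ⟶ SimpleF a b K (glideEquiv v)) ≃ₗ[K] (G' ⟶ SimpleF a b K v) :=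
  (((Functor.whiskeringLeft _ _ _).obj (Tfun a b)).mapLinearEquiv K _ _).trans
    (Linear.homCongr K (eqToIso h.symm) (eqToIso (tfun_comp_simpleF_glideEquiv v)))

theorem homSimpleFGlideEquiv_apply {G G' : (Strip a b)ᵒᵖ ⥤ ModuleCat K}
    (h : G' = Tfun a b ⋙ G) (v : Strip a b) (η : G ⟶ SimpleF a b K (glideEquiv v)) :
    homSimpleFGlideEquiv h v η =
      eqToHom h ≫ Functor.whiskerLeft (Tfun a b) η ≫ eqToHom (tfun_comp_simpleF_glideEquiv v) :=
  rfl

theorem leftComp_comp_homSimpleFGlideEquiv {G₀ G₁ G₀' G₁' : (Strip a b)ᵒᵖ ⥤ ModuleCat K}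
    (h₀ : G₀' = Tfun a b ⋙ G₀) (h₁ : G₁' = Tfun a b ⋙ G₁) {δ : G₁ ⟶ G₀} {δ' : G₁' ⟶ G₀'}
    (hδ : δ' = eqToHom h₁ ≫ (-(Functor.whiskerLeft (Tfun a b) δ)) ≫ eqToHom h₀.symm)
    (v : Strip a b) :
    Linear.leftComp K _ δ' ∘ₗ (homSimpleFGlideEquiv h₀ v).toLinearMap =
      -((homSimpleFGlideEquiv h₁ v).toLinearMap ∘ₗ Linear.leftComp K _ δ) := by
  ext η : 1
  subst hδ
  simp [homSimpleFGlideEquiv_apply]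

instance subsingleton_hom_simpleF (G : (Strip a b)ᵒᵖ ⥤ ModuleCat K) (v : Strip a b)
    [Subsingleton (G.obj (op v))] : Subsingleton (G ⟶ SimpleF a b K v) := by
  refine ⟨fun η θ => NatTrans.ext (funext fun u => ModuleCat.hom_ext (LinearMap.ext fun x => ?_))⟩
  funext hu
  obtain rfl : u = op v := congrArg op hu.down
  rw [Subsingleton.elim x 0, map_zero, map_zero]

theorem extDim_succ_eq_zero_of_obj_eq_zero (P : ℕ → (Strip a b)ᵒᵖ ⥤ ModuleCat K)
    (d : ∀ n, P (n + 1) ⟶ P n)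
    (v : Strip a b) (n : ℕ) (h : ∀ x : (P (n + 1)).obj (op v), x = 0) :
    extDim a b K P d v (n + 1) = 0 := by
  have : Subsingleton ((P (n + 1)).obj (op v)) := subsingleton_of_forall_eq 0 h
  exact Module.finrank_zero_of_subsingleton

theorem exists_uniform_bddAboveSupport {ι : Type*} [Finite ι]
    (G : ι → (Strip a b)ᵒᵖ ⥤ ModuleCat K) (hG : ∀ i, BddAboveSupport a b K (G i)) :
    ∃ c : ℝ, ∀ i u, c < u.1.2 - u.1.1 → ∀ x : (G i).obj (op u), x = 0 := by
  choose c hc using hG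
  obtain ⟨C, hC⟩ := (Set.finite_range c).bddAbove
  exact ⟨C, fun i u hu => hc i u ((hC ⟨i, rfl⟩).trans_lt hu)⟩

namespace IsEquivariantRes

variable {P : ℕ → (Strip a b)ᵒᵖ ⥤ ModuleCat K} {d : ∀ n, P (n + 1) ⟶ P n}

theorem extDim_add_four (heq : IsEquivariantRes a b K P d) (v : Strip a b) (n : ℕ) :
    extDim a b K P d v (n + 4) = extDim a b K P d (glideEquiv v) (n + 1) := by
  obtain ⟨hEq, hd⟩ := heq
  exact LinearMap.finrank_cohomology_eq_of_comp_eq_neg (homSimpleFGlideEquiv (hEq n) v)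
    (homSimpleFGlideEquiv (hEq (n + 1)) v) (homSimpleFGlideEquiv (hEq (n + 2)) v)
    (leftComp_comp_homSimpleFGlideEquiv _ _ (hd n) v)
    (leftComp_comp_homSimpleFGlideEquiv _ _ (hd (n + 1)) v)

theorem extDim_add_three_mul (heq : IsEquivariantRes a b K P d) (n k : ℕ) (v : Strip a b) :
    extDim a b K P d v (n + 1 + 3 * k) = extDim a b K P d ((⇑glideEquiv)^[k] v) (n + 1) := by
  induction k generalizing v with
  | zero => rfl
  | succ k ih =>
    rw [show n + 1 + 3 * (k + 1) = n + 3 * k + 4 by ring, heq.extDim_add_four,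
      show n + 3 * k + 1 = n + 1 + 3 * k by ring, ih, Function.iterate_succ_apply]

end IsEquivariantRes

theorem equivariant_betti_periodicity_general (a b : ℝ) (K : Type) [Field K]
    (F : (Strip a b)ᵒᵖ ⥤ ModuleCat K)
    (P : ℕ → (Strip a b)ᵒᵖ ⥤ ModuleCat K) (d : ∀ n, P (n + 1) ⟶ P n) (ε : P 0 ⟶ F)
    (hres : IsJResolution a b K F P d ε) (heq : IsEquivariantRes a b K P d) :
    (∀ n : ℕ, 1 ≤ n → ∀ v : Strip a b, Strip.InInterior v →
      extDim a b K P d v (n + 3) = extDim a b K P d (Strip.glideEquiv v) n) ∧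
    (∀ v : Strip a b, Strip.InInterior v →
      ∃ N : ℕ, ∀ n, N ≤ n → extDim a b K P d v n = 0) := by
  refine ⟨fun n hn v _ => ?_, fun v hv => ?_⟩
  · obtain ⟨m, rfl⟩ := Nat.exists_eq_add_of_le' hn
    exact heq.extDim_add_four v m
  · obtain ⟨c, hc⟩ := exists_uniform_bddAboveSupport (fun r : Fin 3 => P (r + 1))
      fun r => (hres.1 _).2.2.2
    obtain ⟨k₀, hk₀⟩ := exists_forall_lt_iterate_glideEquiv_sub (hv.1.trans hv.2) v c
    refine ⟨3 * k₀ + 1, fun n hn => ?_⟩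
    obtain ⟨r, k, hr, hk, rfl⟩ : ∃ r k, r < 3 ∧ k₀ ≤ k ∧ n = r + 1 + 3 * k :=
      ⟨(n - 1) % 3, (n - 1) / 3, Nat.mod_lt _ three_pos, by omega, by omega⟩
    rw [heq.extDim_add_three_mul]
    exact extDim_succ_eq_zero_of_obj_eq_zero P d _ r (hc ⟨r, hr⟩ _ (hk₀ k hk))

/-- for an equivariant projective resolution of a `𝒥`-presentable functor,
`β^{n+3}(F) = β^n(F) ∘ T` for `n ≥ 1`; consequently only finitely many Betti numbers are
nonzero at each point, and the Euler function is well-defined. -/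
theorem equivariant_betti_periodicity (a b : ℝ) (K : Type) [Field K]
    (F : (Strip a b)ᵒᵖ ⥤ ModuleCat K) (hF : JPresentable a b K F)
    (P : ℕ → (Strip a b)ᵒᵖ ⥤ ModuleCat K) (d : ∀ n, P (n + 1) ⟶ P n) (ε : P 0 ⟶ F)
    (hres : IsJResolution a b K F P d ε) (heq : IsEquivariantRes a b K P d) :
    (∀ n : ℕ, 1 ≤ n → ∀ v : Strip a b, Strip.InInterior v →
      extDim a b K P d v (n + 3) = extDim a b K P d (Strip.glideEquiv v) n) ∧
    (∀ v : Strip a b, Strip.InInterior v →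
      ∃ N : ℕ, ∀ n, N ≤ n → extDim a b K P d v n = 0) :=
  equivariant_betti_periodicity_general a b K F P d ε hres heq
end
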